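/- Let π be a probability measure on a measurable space Z and ℓ : Z → [0,∞) measurable with 0 < ∫ ℓ dπ < ∞. Let Q be a probability measure on a product space Z × W (a joint variational model over latent variables z and variational latent variables w) with Z-marginal q, and let R be a Markov kernel from Z to W (an auxiliary model r(w | z)). Assume q ≪ π with KL(q ‖ π) < ∞, log ℓ is q-integrable, and the expected auxiliary divergence ∫ KL(Q_{W|Z=z} ‖ R(z)) dq(z) is finite, where Q_{W|Z=z} denotes the conditional (disintegration) of Q given z. Then log ∫ ℓ dπ ≥ ∫ log ℓ dq − KL(q ‖ π) − ∫ KL(Q_{W|Z=z} ‖ R(z)) dq(z). -/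

import Mathlib

open MeasureTheory ProbabilityTheory Set

/-! Gibbs' inequality makes the expected auxiliary divergence nonnegative, so it suffices to
bound the ordinary ELBO `∫ log ℓ dq - KL(q ‖ π)`. Restrict `π` to `{ℓ > 0}`, which carries `q`
and all of the evidence, and tilt it by `log ℓ`; the tilted measure is `ℓ π / ∫ ℓ dπ`, and
expanding the nonnegative divergence of `q` from it gives `∫ log ℓ dq - KL(q ‖ π) ≤ log ∫ ℓ dπ`. -/

section

variable {α : Type*} [MeasurableSpace α] {μ ν : Measure α}

lemma integral_llr_nonneg [IsProbabilityMeasure μ] [IsProbabilityMeasure ν]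
    (hμν : μ ≪ ν) (h_int : Integrable (llr μ ν) μ) : 0 ≤ ∫ x, llr μ ν x ∂μ := by
  simpa using InformationTheory.integral_llr_add_sub_measure_univ_nonneg hμν h_int

lemma integral_sub_integral_llr_le_log_integral_exp [IsProbabilityMeasure μ] [SigmaFinite ν]
    {f : α → ℝ} (hμν : μ ≪ ν) (hfμ : Integrable f μ)
    (hfν : Integrable (fun x ↦ Real.exp (f x)) ν) (h_int : Integrable (llr μ ν) μ) :
    ∫ x, f x ∂μ - ∫ x, llr μ ν x ∂μ ≤ Real.log (∫ x, Real.exp (f x) ∂ν) := by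
  have : NeZero ν := ⟨fun hν ↦ IsProbabilityMeasure.ne_zero μ
    (Measure.absolutelyContinuous_zero_iff.mp (hν ▸ hμν))⟩
  have : IsProbabilityMeasure (ν.tilted f) := isProbabilityMeasure_tilted hfν
  have h_gibbs := integral_llr_nonneg (hμν.trans (absolutelyContinuous_tilted hfν))
    (integrable_llr_tilted_right hμν hfμ h_int hfν)
  rw [integral_llr_tilted_right hμν hfμ hfν h_int] at h_gibbs
  linarith

lemma absolutelyContinuous_restrict_of_ae_mem {s : Set α} (hμν : μ ≪ ν)
    (hμs : ∀ᵐ x ∂μ, x ∈ s) : μ ≪ ν.restrict s := by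
  simpa [Measure.restrict_eq_self_of_ae_mem hμs] using hμν.restrict s

lemma llr_restrict_right_ae_eq [SigmaFinite μ] [SigmaFinite ν] {s : Set α}
    (hs : MeasurableSet s) (hμν : μ ≪ ν) (hμs : ∀ᵐ x ∂μ, x ∈ s) :
    llr μ (ν.restrict s) =ᵐ[μ] llr μ ν := by
  filter_upwards [hμν.ae_le (Measure.rnDeriv_mul_rnDeriv
      (absolutelyContinuous_restrict_of_ae_mem hμν hμs)),
    hμν.ae_le (Measure.rnDeriv_restrict_self ν hs), hμs] with x h_chain h_restrict hx
  simp only [Pi.mul_apply, h_restrict, indicator_of_mem hx, Pi.one_apply, mul_one] at h_chain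
  simp only [llr, h_chain]

lemma integral_log_sub_integral_llr_le_log_integral [IsProbabilityMeasure μ] [SigmaFinite ν]
    {ℓ : α → ℝ} (hℓ_meas : Measurable ℓ) (hℓ_nonneg : ∀ᵐ x ∂ν, 0 ≤ ℓ x)
    (hℓ_int : Integrable ℓ ν) (hμν : μ ≪ ν)
    (hlog_int : Integrable (fun x ↦ Real.log (ℓ x)) μ)
    (hℓ_pos : ∀ᵐ x ∂μ, 0 < ℓ x) (h_int : Integrable (llr μ ν) μ) :
    ∫ x, Real.log (ℓ x) ∂μ - ∫ x, llr μ ν x ∂μ ≤ Real.log (∫ x, ℓ x ∂ν) := by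
  set s := {x | 0 < ℓ x}
  have hs : MeasurableSet s := measurableSet_lt measurable_const hℓ_meas
  have hμs : ∀ᵐ x ∂μ, x ∈ s := hℓ_pos
  have h_llr := llr_restrict_right_ae_eq hs hμν hμs
  have h_exp_log : (fun x ↦ Real.exp (Real.log (ℓ x))) =ᵐ[ν.restrict s] ℓ :=
    (ae_restrict_iff' hs).mpr (ae_of_all _ fun x hx ↦ Real.exp_log hx)
  have h_evidence : ∫ x, Real.exp (Real.log (ℓ x)) ∂(ν.restrict s) = ∫ x, ℓ x ∂ν := by
    rw [integral_congr_ae h_exp_log]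
    refine setIntegral_eq_integral_of_ae_compl_eq_zero ?_
    filter_upwards [hℓ_nonneg] with x hx hxs using hx.antisymm' (not_lt.mp hxs)
  have h_dv := integral_sub_integral_llr_le_log_integral_exp
    (absolutelyContinuous_restrict_of_ae_mem hμν hμs) hlog_int
    (hℓ_int.restrict.congr h_exp_log.symm) (h_int.congr h_llr.symm)
  rwa [h_evidence, integral_congr_ae h_llr] at h_dv

end

theorem hierarchical_elbo_le_log_evidence_general
    {Z W : Type*} [MeasurableSpace Z] [MeasurableSpace W]
    [StandardBorelSpace W] [Nonempty W]
    (π : Measure Z) [IsProbabilityMeasure π]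
    (ℓ : Z → ℝ) (hℓ_meas : Measurable ℓ) (hℓ_nonneg : ∀ z, 0 ≤ ℓ z)
    (hℓ_int : Integrable ℓ π)
    (Q : Measure (Z × W)) [IsProbabilityMeasure Q]
    (R : Kernel Z W) [IsMarkovKernel R]
    (q : Measure Z) (hq : q = Q.map Prod.fst)
    (hac : q ≪ π) (hkl_int : Integrable (llr q π) q)
    (hlog_int : Integrable (fun z => Real.log (ℓ z)) q)
    (hℓ_pos : ∀ᵐ z ∂q, 0 < ℓ z)
    (haux_ac : ∀ᵐ z ∂q, Q.condKernel z ≪ R z)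
    (haux_int : ∀ᵐ z ∂q, Integrable (llr (Q.condKernel z) (R z)) (Q.condKernel z)) :
    (∫ z, Real.log (ℓ z) ∂q) - (∫ z, llr q π z ∂q)
        - (∫ z, (∫ w, llr (Q.condKernel z) (R z) w ∂(Q.condKernel z)) ∂q)
      ≤ Real.log (∫ z, ℓ z ∂π) := by
  have : IsProbabilityMeasure q :=
    hq ▸ Measure.isProbabilityMeasure_map measurable_fst.aemeasurable
  have h_aux_nonneg :
      0 ≤ ∫ z, (∫ w, llr (Q.condKernel z) (R z) w ∂(Q.condKernel z)) ∂q := by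
    refine integral_nonneg_of_ae ?_
    filter_upwards [haux_ac, haux_int] with z h_ac h_int using integral_llr_nonneg h_ac h_int
  have h_elbo := integral_log_sub_integral_llr_le_log_integral hℓ_meas
    (ae_of_all _ hℓ_nonneg) hℓ_int hac hlog_int hℓ_pos hkl_int
  linarith

/-- hierarchical / auxiliary ELBO: Let `π` be a probability measure
on `Z` and `ℓ : Z → [0,∞)` measurable with `0 < ∫ ℓ dπ < ∞`. Let `Q` be a
probability measure on `Z × W` (a joint variational model) with `Z`-marginal `q`,
and let `R` be a Markov kernel from `Z` to `W` (an auxiliary model). Assume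
`q ≪ π` with `KL(q ‖ π) < ∞`, `log ℓ` is `q`-integrable (in particular `ℓ > 0`
`q`-a.e.), and the expected auxiliary divergence
`∫ KL(Q_{W|Z=z} ‖ R z) dq(z)` is finite, where `Q_{W|Z=z} = Q.condKernel z` is
the disintegration of `Q` given `z`. Then
`log ∫ ℓ dπ ≥ ∫ log ℓ dq − KL(q ‖ π) − ∫ KL(Q_{W|Z=z} ‖ R z) dq(z)`. -/
theorem hierarchical_elbo_le_log_evidence
    {Z W : Type*} [MeasurableSpace Z] [MeasurableSpace W]
    [StandardBorelSpace W] [Nonempty W]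
    (π : Measure Z) [IsProbabilityMeasure π]
    (ℓ : Z → ℝ) (hℓ_meas : Measurable ℓ) (hℓ_nonneg : ∀ z, 0 ≤ ℓ z)
    (hℓ_int : Integrable ℓ π) (hev_pos : 0 < ∫ z, ℓ z ∂π)
    (Q : Measure (Z × W)) [IsProbabilityMeasure Q]
    (R : Kernel Z W) [IsMarkovKernel R]
    (q : Measure Z) (hq : q = Q.map Prod.fst)
    (hac : q ≪ π) (hkl_int : Integrable (llr q π) q)
    (hlog_int : Integrable (fun z => Real.log (ℓ z)) q)
    (hℓ_pos : ∀ᵐ z ∂q, 0 < ℓ z)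
    (haux_ac : ∀ᵐ z ∂q, Q.condKernel z ≪ R z)
    (haux_int : ∀ᵐ z ∂q, Integrable (llr (Q.condKernel z) (R z)) (Q.condKernel z))
    (haux_outer :
      Integrable (fun z => ∫ w, llr (Q.condKernel z) (R z) w ∂(Q.condKernel z)) q) :
    (∫ z, Real.log (ℓ z) ∂q) - (∫ z, llr q π z ∂q)
        - (∫ z, (∫ w, llr (Q.condKernel z) (R z) w ∂(Q.condKernel z)) ∂q)
      ≤ Real.log (∫ z, ℓ z ∂π) :=
  hierarchical_elbo_le_log_evidence_general π ℓ hℓ_meas hℓ_nonneg hℓ_int Q R q hq hac hkl_int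
    hlog_int hℓ_pos haux_ac haux_int
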